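/- arXiv:2206.03723 — 2 statements merged into one kernel-verified Lean document; each statement's English description precedes it below -/
import Mathlib

section
/- Let G be a graph maximizing the Q-spread s_Q among all connected graphs on n vertices, let x be a nonnegative unit eigenvector of Q(G) for q1(G) and z a unit eigenvector of Q(G) for qn(G). Then for any two distinct vertices u and v: (i) if x_u + x_v > |z_u + z_v|, then u and v are adjacent in G; (ii) if x_u + x_v < |z_u + z_v| and the graph G − uv obtained by deleting the edge uv is connected, then u and v are non-adjacent in G. -/
/-
Adding the edge `uv` adds `w wᵀ` to `Q(G)`, where `w = e_u + e_v`, so the Rayleigh quotients of `x`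
and `z` grow by `(x_u + x_v)²` and `(z_u + z_v)²`. By Rayleigh's principle,
`s_Q(G + uv) ≥ s_Q(G) + (x_u + x_v)² - (z_u + z_v)²`, and symmetrically
`s_Q(G - uv) ≥ s_Q(G) - (x_u + x_v)² + (z_u + z_v)²`; maximality of `s_Q(G)` then rules out a
missing edge in case (i) and a present one in case (ii).
-/

/-- The adjacency matrix of a simple graph on `Fin n`, over `ℝ`. -/
noncomputable def adjMat {n : ℕ} (G : SimpleGraph (Fin n)) : Matrix (Fin n) (Fin n) ℝ :=
  letI : DecidableRel G.Adj := Classical.decRel _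
  G.adjMatrix ℝ

/-- The set of eigenvalues of a real square matrix. -/
def eigSet {n : ℕ} (M : Matrix (Fin n) (Fin n) ℝ) : Set ℝ :=
  {mu : ℝ | ∃ x : Fin n → ℝ, x ≠ 0 ∧ M.mulVec x = mu • x}

/-- The largest eigenvalue of a real square matrix. -/
noncomputable def lamMax {n : ℕ} (M : Matrix (Fin n) (Fin n) ℝ) : ℝ := sSup (eigSet M)

/-- The least eigenvalue of a real square matrix. -/
noncomputable def lamMin {n : ℕ} (M : Matrix (Fin n) (Fin n) ℝ) : ℝ := sInf (eigSet M)

/-- `λ₁(G)`: the largest adjacency eigenvalue of `G`. -/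
noncomputable def lam1 {n : ℕ} (G : SimpleGraph (Fin n)) : ℝ := lamMax (adjMat G)

/-- The degree of a vertex. -/
noncomputable def deg {n : ℕ} (G : SimpleGraph (Fin n)) (v : Fin n) : ℕ :=
  Nat.card {u : Fin n // G.Adj v u}

/-- The signless Laplacian `Q(G) = D(G) + A(G)`. -/
noncomputable def signlessLap {n : ℕ} (G : SimpleGraph (Fin n)) : Matrix (Fin n) (Fin n) ℝ :=
  Matrix.diagonal (fun v => (deg G v : ℝ)) + adjMat G

/-- `q₁(G)`: the largest signless Laplacian eigenvalue. -/
noncomputable def q1 {n : ℕ} (G : SimpleGraph (Fin n)) : ℝ := lamMax (signlessLap G)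

/-- `qₙ(G)`: the least signless Laplacian eigenvalue. -/
noncomputable def qmin {n : ℕ} (G : SimpleGraph (Fin n)) : ℝ := lamMin (signlessLap G)

/-- The `Q`-spread `s_Q(G) = q₁(G) - qₙ(G)`. -/
noncomputable def sQ {n : ℕ} (G : SimpleGraph (Fin n)) : ℝ := q1 G - qmin G

/-- The complete split graph `CS_{n,ω}`: a clique on the first `ω` vertices, completely
joined to an independent set on the remaining `n - ω` vertices. -/
def CS (n w : ℕ) : SimpleGraph (Fin n) where
  Adj u v := u ≠ v ∧ ((u : ℕ) < w ∨ (v : ℕ) < w)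
  symm := by constructor; intro u v h; exact ⟨h.1.symm, h.2.symm⟩
  loopless := by constructor; intro u h; exact h.1 rfl

/-- `K_{n-1}^+`: the complete graph on the first `n-1` vertices together with a pendant
vertex (the last vertex) joined to exactly one clique vertex (vertex `0`). -/
def KPlus (n : ℕ) : SimpleGraph (Fin n) where
  Adj u v := u ≠ v ∧ (((u : ℕ) < n - 1 ∧ (v : ℕ) < n - 1) ∨ (u : ℕ) = 0 ∨ (v : ℕ) = 0)
  symm := by constructor; intro u v h; refine ⟨h.1.symm, ?_⟩; tauto
  loopless := by constructor; intro u h; exact h.1 rfl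

open Matrix MatrixOrder SimpleGraph

lemma dotProduct_self_eq_sum_sq {ι R : Type*} [Fintype ι] [CommSemiring R] (y : ι → R) :
    y ⬝ᵥ y = ∑ i, y i ^ 2 := by
  simp [dotProduct, sq]

section Rayleigh

variable {n : ℕ} {M : Matrix (Fin n) (Fin n) ℝ}

lemma eigSet_eq_spectrum (M : Matrix (Fin n) (Fin n) ℝ) : eigSet M = spectrum ℝ M := by
  ext μ
  rw [← Matrix.spectrum_toLin', ← Module.End.hasEigenvalue_iff_mem_spectrum,
    Module.End.hasEigenvalue_iff, Submodule.ne_bot_iff]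
  simp [eigSet, and_comm]

lemma Matrix.IsHermitian.lamMin_mul_dotProduct_self_le (hM : M.IsHermitian) (y : Fin n → ℝ) :
    lamMin M * (y ⬝ᵥ y) ≤ y ⬝ᵥ M *ᵥ y := by
  have hle : algebraMap ℝ _ (lamMin M) ≤ M :=
    (algebraMap_le_iff_le_spectrum hM.isSelfAdjoint).2 fun μ hμ =>
      csInf_le (eigSet_eq_spectrum M ▸ M.finite_real_spectrum.bddBelow)
        (by rwa [eigSet_eq_spectrum])
  simpa [sub_mulVec, Algebra.algebraMap_eq_smul_one, smul_mulVec, dotProduct_smul] using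
    (Matrix.le_iff.1 hle).dotProduct_mulVec_nonneg y

lemma Matrix.IsHermitian.dotProduct_mulVec_le_lamMax_mul (hM : M.IsHermitian) (y : Fin n → ℝ) :
    y ⬝ᵥ M *ᵥ y ≤ lamMax M * (y ⬝ᵥ y) := by
  have hle : M ≤ algebraMap ℝ _ (lamMax M) :=
    (le_algebraMap_iff_spectrum_le hM.isSelfAdjoint).2 fun μ hμ =>
      le_csSup (eigSet_eq_spectrum M ▸ M.finite_real_spectrum.bddAbove)
        (by rwa [eigSet_eq_spectrum])
  simpa [sub_mulVec, Algebra.algebraMap_eq_smul_one, smul_mulVec, dotProduct_smul] using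
    (Matrix.le_iff.1 hle).dotProduct_mulVec_nonneg y

lemma dotProduct_mulVec_eq_of_mulVec_eq_smul {μ : ℝ} {y : Fin n → ℝ} (hy : M *ᵥ y = μ • y)
    (hy1 : ∑ v, y v ^ 2 = 1) : y ⬝ᵥ M *ᵥ y = μ := by
  rw [hy, dotProduct_smul, dotProduct_self_eq_sum_sq, hy1, smul_eq_mul, mul_one]

end Rayleigh

lemma SimpleGraph.deleteEdges_sup_edge_of_adj {V : Type*} {G : SimpleGraph V} {u v : V}
    (h : G.Adj u v) : G.deleteEdges {s(u, v)} ⊔ edge u v = G := by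
  ext a b
  simp only [sup_adj, deleteEdges_adj, edge_adj, Set.mem_singleton_iff, Sym2.eq_iff]
  grind [G.ne_of_adj, G.adj_symm]

section SignlessLaplacian

variable {n : ℕ} (G : SimpleGraph (Fin n))

lemma adjMat_eq_adjMatrix [DecidableRel G.Adj] : adjMat G = G.adjMatrix ℝ := by
  unfold adjMat; congr

lemma deg_eq_degree (v : Fin n) [Fintype (G.neighborSet v)] : deg G v = G.degree v := by
  rw [deg, ← card_neighborSet_eq_degree, ← Nat.card_eq_fintype_card]; rfl

lemma signlessLap_eq_diagonal_add : signlessLap G = diagonal (adjMat G *ᵥ 1) + adjMat G := by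
  classical
  rw [signlessLap, adjMat_eq_adjMatrix]
  congr 2
  ext v
  simp [deg_eq_degree, ← Function.const_one]

lemma isHermitian_signlessLap : (signlessLap G).IsHermitian := by
  classical
  rw [signlessLap, adjMat_eq_adjMatrix]
  exact (isHermitian_diagonal _).add (isSymm_adjMatrix G)

lemma dotProduct_mulVec_sub_le_sQ {x z : Fin n → ℝ}
    (hx1 : ∑ v, x v ^ 2 = 1) (hz1 : ∑ v, z v ^ 2 = 1) :
    x ⬝ᵥ signlessLap G *ᵥ x - z ⬝ᵥ signlessLap G *ᵥ z ≤ sQ G := by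
  have hx := (isHermitian_signlessLap G).dotProduct_mulVec_le_lamMax_mul x
  have hz := (isHermitian_signlessLap G).lamMin_mul_dotProduct_self_le z
  rw [dotProduct_self_eq_sum_sq, hx1, mul_one] at hx
  rw [dotProduct_self_eq_sum_sq, hz1, mul_one] at hz
  rw [sQ, q1, qmin]
  linarith

variable {G} {u v : Fin n}

lemma adjMat_sup_edge (h : ¬G.Adj u v) : adjMat (G ⊔ edge u v) = adjMat G + adjMat (edge u v) := by
  classical
  ext i j
  by_cases hij : G.Adj i j
  · have : ¬(edge u v).Adj i j := by
      rw [edge_adj]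
      rintro ⟨⟨rfl, rfl⟩ | ⟨rfl, rfl⟩, -⟩
      exacts [h hij, h hij.symm]
    simp [adjMat_eq_adjMatrix, hij, this]
  · simp [adjMat_eq_adjMatrix, hij]

lemma signlessLap_sup_edge (h : ¬G.Adj u v) :
    signlessLap (G ⊔ edge u v) = signlessLap G + signlessLap (edge u v) := by
  ext i j
  simp only [signlessLap_eq_diagonal_add, adjMat_sup_edge h, add_mulVec, Matrix.add_apply,
    diagonal_apply, Pi.add_apply]
  split_ifs <;> ring

lemma signlessLap_edge (huv : u ≠ v) :
    signlessLap (edge u v) =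
      vecMulVec (Pi.single u 1 + Pi.single v 1) (Pi.single u 1 + Pi.single v 1) := by
  have hA : adjMat (edge u v) = single u v 1 + single v u 1 := by
    ext i j
    simp [adjMat_eq_adjMatrix, edge_adj, single_apply]
    grind
  ext i j
  simp [signlessLap_eq_diagonal_add, hA, add_mulVec, single_mulVec_eq, diagonal_apply,
    vecMulVec_apply, single_apply, Pi.single_apply]
  grind

lemma dotProduct_signlessLap_sup_edge_mulVec (h : ¬G.Adj u v) (huv : u ≠ v) (y : Fin n → ℝ) :
    y ⬝ᵥ signlessLap (G ⊔ edge u v) *ᵥ y = y ⬝ᵥ signlessLap G *ᵥ y + (y u + y v) ^ 2 := by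
  rw [signlessLap_sup_edge h, add_mulVec, dotProduct_add, signlessLap_edge huv]
  simp [vecMulVec_mulVec, add_dotProduct, dotProduct_add]
  ring

variable {x z : Fin n → ℝ}

lemma sQ_add_sq_sub_sq_le_sQ_sup_edge (h : ¬G.Adj u v) (huv : u ≠ v)
    (hx : signlessLap G *ᵥ x = q1 G • x) (hx1 : ∑ v, x v ^ 2 = 1)
    (hz : signlessLap G *ᵥ z = qmin G • z) (hz1 : ∑ v, z v ^ 2 = 1) :
    sQ G + (x u + x v) ^ 2 - (z u + z v) ^ 2 ≤ sQ (G ⊔ edge u v) := by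
  have hH := dotProduct_mulVec_sub_le_sQ (G ⊔ edge u v) hx1 hz1
  rw [dotProduct_signlessLap_sup_edge_mulVec h huv, dotProduct_signlessLap_sup_edge_mulVec h huv,
    dotProduct_mulVec_eq_of_mulVec_eq_smul hx hx1,
    dotProduct_mulVec_eq_of_mulVec_eq_smul hz hz1] at hH
  rw [sQ]
  linarith

lemma sQ_sub_sq_add_sq_le_sQ_deleteEdges (h : G.Adj u v) (huv : u ≠ v)
    (hx : signlessLap G *ᵥ x = q1 G • x) (hx1 : ∑ v, x v ^ 2 = 1)
    (hz : signlessLap G *ᵥ z = qmin G • z) (hz1 : ∑ v, z v ^ 2 = 1) :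
    sQ G - (x u + x v) ^ 2 + (z u + z v) ^ 2 ≤ sQ (G.deleteEdges {s(u, v)}) := by
  set H := G.deleteEdges {s(u, v)}
  have hnadj : ¬H.Adj u v := by simp [H]
  have hqx := dotProduct_signlessLap_sup_edge_mulVec hnadj huv x
  have hqz := dotProduct_signlessLap_sup_edge_mulVec hnadj huv z
  rw [deleteEdges_sup_edge_of_adj h, dotProduct_mulVec_eq_of_mulVec_eq_smul hx hx1] at hqx
  rw [deleteEdges_sup_edge_of_adj h, dotProduct_mulVec_eq_of_mulVec_eq_smul hz hz1] at hqz
  have hH := dotProduct_mulVec_sub_le_sQ H hx1 hz1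
  rw [sQ]
  linarith

end SignlessLaplacian

theorem stmt13 {n : ℕ} (G : SimpleGraph (Fin n)) (hconn : G.Connected)
    (hmax : ∀ H : SimpleGraph (Fin n), H.Connected → sQ H ≤ sQ G)
    (x z : Fin n → ℝ)
    (hx0 : ∀ v, 0 ≤ x v)
    (hx1 : ∑ v, x v ^ 2 = 1) (hz1 : ∑ v, z v ^ 2 = 1)
    (hx : (signlessLap G).mulVec x = q1 G • x)
    (hz : (signlessLap G).mulVec z = qmin G • z) :
    ∀ u v : Fin n, u ≠ v →
      (|z u + z v| < x u + x v → G.Adj u v) ∧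
      (x u + x v < |z u + z v| → (G.deleteEdges {s(u, v)}).Connected → ¬ G.Adj u v) := by
  intro u v huv
  constructor
  · intro hlt
    by_contra hnadj
    have hsq : (z u + z v) ^ 2 < (x u + x v) ^ 2 := sq_lt_sq.2 (hlt.trans_le (le_abs_self _))
    have := sQ_add_sq_sub_sq_le_sQ_sup_edge hnadj huv hx hx1 hz hz1
    have := hmax (G ⊔ edge u v) (hconn.mono le_sup_left)
    linarith
  · intro hlt hconn' hadj
    have hsq : (x u + x v) ^ 2 < (z u + z v) ^ 2 :=
      sq_lt_sq.2 (by rwa [abs_of_nonneg (add_nonneg (hx0 u) (hx0 v))])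
    have := sQ_sub_sq_add_sq_le_sQ_deleteEdges hadj huv hx hx1 hz hz1
    have := hmax _ hconn'
    linarith
end

section
/- There exists N such that for every n ≥ N, the complete bipartite graph G = K_{⌊n/3⌋,⌈2n/3⌉} satisfies λ1(G) + λ1(Ḡ) > 1.1·n; consequently, the maximum of λ1(H) + λ1(H̄) over all graphs H on n vertices exceeds 1.1·n. -/
/-- The complete bipartite graph `K_{⌊n/3⌋, ⌈2n/3⌉}` realized on `Fin n`, with parts the
first `⌊n/3⌋` vertices and the remaining `⌈2n/3⌉` vertices. -/
def bip (n : ℕ) : SimpleGraph (Fin n) where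
  Adj u v := ((u : ℕ) < n / 3 ∧ ¬ (v : ℕ) < n / 3) ∨ ((v : ℕ) < n / 3 ∧ ¬ (u : ℕ) < n / 3)
  symm := by constructor; intro u v h; tauto
  loopless := by constructor; intro u h; tauto

/-!
`λ₁` dominates every eigenvalue, since a matrix has finitely many. On `K_{a,b}` the vector equal
to `√b` on the `a`-side and `√a` on the `b`-side has eigenvalue `√(ab)`; the complement is
`K_a ∪ K_b`, where the indicator of the `b`-side has eigenvalue `b - 1`. For `a = ⌊n/3⌋` and
`b = n - a` this gives `λ₁(G) + λ₁(Ḡ) ≥ (√2/3 + 2/3) n - O(1) ≈ 1.138 n`.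
-/

open Finset Matrix

lemma eigSet_finite {n : ℕ} (M : Matrix (Fin n) (Fin n) ℝ) : (eigSet M).Finite :=
  (Module.End.finite_hasEigenvalue (Matrix.toLin' M)).subset fun _ ⟨x, hx, hMx⟩ =>
    Module.End.hasEigenvalue_of_hasEigenvector
      ⟨Module.End.mem_eigenspace_iff.2 (by rwa [Matrix.toLin'_apply]), hx⟩

lemma le_lamMax {n : ℕ} {M : Matrix (Fin n) (Fin n) ℝ} {μ : ℝ} (h : μ ∈ eigSet M) :
    μ ≤ lamMax M :=
  le_csSup (eigSet_finite M).bddAbove h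

open scoped Classical in
lemma adjMat_mulVec_apply {n : ℕ} (G : SimpleGraph (Fin n)) (x : Fin n → ℝ) (v : Fin n) :
    (adjMat G *ᵥ x) v = ∑ u with G.Adj v u, x u := by
  simp [adjMat, SimpleGraph.neighborFinset_eq_filter]

def completeBipartiteOn {n : ℕ} (s : Finset (Fin n)) : SimpleGraph (Fin n) where
  Adj u v := (u ∈ s ↔ v ∉ s)
  symm := by constructor; intro u v h; tauto
  loopless := by constructor; intro u h; tauto

lemma bip_eq (n : ℕ) : bip n = completeBipartiteOn {v : Fin n | (v : ℕ) < n / 3} := by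
  ext u v; simp only [bip, completeBipartiteOn, mem_filter, mem_univ, true_and]; omega

section CompleteBipartiteOn

variable {n : ℕ} (s : Finset (Fin n))

lemma completeBipartiteOn_compl_finset : completeBipartiteOn sᶜ = completeBipartiteOn s := by
  ext u v; simp only [completeBipartiteOn, mem_compl]; tauto

lemma adjMat_completeBipartiteOn_mulVec_apply (x : Fin n → ℝ) (v : Fin n) :
    (adjMat (completeBipartiteOn s) *ᵥ x) v =
      if v ∈ s then ∑ u ∈ sᶜ, x u else ∑ u ∈ s, x u := by
  rw [adjMat_mulVec_apply]
  split_ifs with hv <;> congr 1 <;> ext u <;> simp [completeBipartiteOn, hv]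

lemma adjMat_compl_completeBipartiteOn_mulVec_apply (x : Fin n → ℝ) (v : Fin n) :
    (adjMat (completeBipartiteOn s)ᶜ *ᵥ x) v =
      if v ∈ s then ∑ u ∈ s.erase v, x u else ∑ u ∈ sᶜ.erase v, x u := by
  rw [adjMat_mulVec_apply]
  split_ifs with hv <;> congr 1 <;> ext u <;> by_cases hu : u ∈ s <;>
    simp [completeBipartiteOn, hv, hu, eq_comm]

lemma sqrt_card_mul_card_compl_mem_eigSet (hs : s.Nonempty) (hsc : sᶜ.Nonempty) :
    √(#s * #sᶜ) ∈ eigSet (adjMat (completeBipartiteOn s)) := by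
  obtain ⟨v₀, hv₀⟩ := hs
  have hb : (0 : ℝ) < #sᶜ := by exact_mod_cast hsc.card_pos
  refine ⟨fun v => if v ∈ s then √(#sᶜ) else √(#s), fun h => ?_, funext fun v => ?_⟩
  · have := congrFun h v₀
    simp only [hv₀, if_true, Pi.zero_apply] at this
    exact (Real.sqrt_pos.2 hb).ne' this
  · rw [adjMat_completeBipartiteOn_mulVec_apply, Real.sqrt_mul (Nat.cast_nonneg _)]
    by_cases hv : v ∈ s
    · rw [sum_congr rfl fun u hu => if_neg (mem_compl.1 hu)]
      simp only [hv, if_true, sum_const, nsmul_eq_mul, Pi.smul_apply, smul_eq_mul]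
      rw [mul_assoc, Real.mul_self_sqrt hb.le]
      ring
    · rw [sum_congr rfl fun u hu => if_pos hu]
      simp only [hv, if_false, sum_const, nsmul_eq_mul, Pi.smul_apply, smul_eq_mul]
      rw [mul_comm √_ √_, mul_assoc, Real.mul_self_sqrt (Nat.cast_nonneg _)]
      ring

lemma card_sub_one_mem_eigSet_compl (hs : s.Nonempty) :
    (#s : ℝ) - 1 ∈ eigSet (adjMat (completeBipartiteOn s)ᶜ) := by
  obtain ⟨v₀, hv₀⟩ := hs
  refine ⟨fun v => if v ∈ s then 1 else 0, fun h => ?_, funext fun v => ?_⟩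
  · simpa [hv₀] using congrFun h v₀
  · rw [adjMat_compl_completeBipartiteOn_mulVec_apply]
    by_cases hv : v ∈ s
    · rw [sum_congr rfl fun u hu => if_pos (mem_of_mem_erase hu)]
      simp [hv, card_erase_of_mem hv, Nat.cast_sub (card_pos.2 ⟨v, hv⟩)]
    · rw [sum_congr rfl fun u hu => if_neg (mem_compl.1 (mem_of_mem_erase hu))]
      simp [hv]

end CompleteBipartiteOn

lemma eleven_tenths_mul_lt {n : ℕ} (hn : 100 ≤ n) :
    1.1 * (n : ℝ) < √((n / 3 : ℕ) * (n - n / 3 : ℕ)) + ((n - n / 3 : ℕ) - 1) := by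
  set a := n / 3
  have hb : ((n - a : ℕ) : ℝ) = n - a := Nat.cast_sub (by omega)
  have ha_le : 3 * (a : ℝ) ≤ n := by exact_mod_cast (by omega : 3 * a ≤ n)
  have le_ha : (n : ℝ) ≤ 3 * a + 2 := by exact_mod_cast (by omega : n ≤ 3 * a + 2)
  have hn' : (100 : ℝ) ≤ n := by exact_mod_cast hn
  have : (a : ℝ) + 0.1 * n + 1 < √(a * (n - a : ℕ)) := by
    rw [hb, Real.lt_sqrt (by positivity)]
    nlinarith [mul_nonneg (by linarith : (0 : ℝ) ≤ 3 * a - (n - 2))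
      (by linarith : (0 : ℝ) ≤ n - 3 * a)]
  rw [hb] at this ⊢
  linarith

theorem stmt19 :
    ∃ N : ℕ, ∀ n : ℕ, N ≤ n →
      1.1 * (n : ℝ) < lam1 (bip n) + lam1 (bip n)ᶜ ∧
      ∃ H : SimpleGraph (Fin n), 1.1 * (n : ℝ) < lam1 H + lam1 Hᶜ := by
  refine ⟨100, fun n hn => ?_⟩
  set s : Finset (Fin n) := {v | (v : ℕ) < n / 3}
  have hs : #s = n / 3 := by rw [Fin.card_filter_val_lt]; omega
  have hsc : #sᶜ = n - n / 3 := by rw [card_compl, hs, Fintype.card_fin]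
  have key : 1.1 * (n : ℝ) < lam1 (bip n) + lam1 (bip n)ᶜ := by
    rw [bip_eq]
    calc 1.1 * (n : ℝ) < √((n / 3 : ℕ) * (n - n / 3 : ℕ)) + ((n - n / 3 : ℕ) - 1) :=
          eleven_tenths_mul_lt hn
      _ = √(#s * #sᶜ) + (#sᶜ - 1) := by rw [hs, hsc]
      _ ≤ lam1 (completeBipartiteOn s) + lam1 (completeBipartiteOn s)ᶜ := by
        have hne : s.Nonempty := card_pos.1 (by omega)
        have hcne : sᶜ.Nonempty := card_pos.1 (by omega)
        refine add_le_add (le_lamMax (sqrt_card_mul_card_compl_mem_eigSet s hne hcne)) ?_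
        rw [← completeBipartiteOn_compl_finset s]
        exact le_lamMax (card_sub_one_mem_eigSet_compl sᶜ hcne)
  exact ⟨key, bip n, key⟩
end
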